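/- Let M, Q be real with Q ≠ 0, let Λ = 0, and let λ̄ ∈ (0,1). If r₀ > 0 satisfies P(r₀,λ̄) = 0, then there exists r_H with r_H > r₀ and P(r_H,1) = 0 (for vanishing cosmological constant, the existence of the minimum r₀ of the area-radius function requires the existence of a black-hole horizon above it). -/
import Mathlib


noncomputable section

/-- The quartic polynomial `P(r,s) = sL/3*r^4 - r^2 + 2sM*r - sQ^2` (case `Q != 0`). -/
def P (M Q Λ s r : ℝ) : ℝ := s * Λ / 3 * r ^ 4 - r ^ 2 + 2 * s * M * r - s * Q ^ 2

/-- First derivative of `P` with respect to `r`. -/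
def P' (M Q Λ s r : ℝ) : ℝ := 4 * s * Λ / 3 * r ^ 3 - 2 * r + 2 * s * M

/-- Second derivative of `P` with respect to `r`. -/
def P'' (M Q Λ s r : ℝ) : ℝ := 4 * s * Λ * r ^ 2 - 2

/-- For Λ = 0: the existence of a critical value `r₀ > 0` (root of `P(·,λ̄)`) requires the
existence of a black-hole horizon `r_H > r₀` (root of `P(·,1)`). -/
theorem critical_value_requires_bh_horizon (M Q Λ lam r₀ : ℝ)
    (hΛ : Λ = 0) (hQ : Q ≠ 0) (h0 : 0 < lam) (h1 : lam < 1)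
    (hr : 0 < r₀) (hroot : P M Q Λ lam r₀ = 0) :
    ∃ rH : ℝ, r₀ < rH ∧ P M Q Λ 1 rH = 0 := by
  subst hΛ
  have hlam : lam ≠ 0 := ne_of_gt h0
  have hr' : r₀ ≠ 0 := ne_of_gt hr
  have hE : 2 * lam * M * r₀ = r₀ ^ 2 + lam * Q ^ 2 := by
    have h := hroot; simp only [P] at h; linear_combination h
  have hM : M = (r₀ ^ 2 + lam * Q ^ 2) / (2 * lam * r₀) := by
    field_simp; linear_combination hE
  set c : ℝ := (r₀ ^ 2 - lam * Q ^ 2) / (2 * lam * r₀) with hc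
  have h2 : (2 * lam * M * r₀) ^ 2 = (r₀ ^ 2 + lam * Q ^ 2) ^ 2 := by rw [hE]
  have hpos : 0 ≤ lam * (1 - lam) * (Q * r₀) ^ 2 := mul_nonneg (mul_nonneg h0.le (by linarith)) (sq_nonneg _)
  have key : (r₀ ^ 2 - lam * Q ^ 2) ^ 2 ≤ (M ^ 2 - Q ^ 2) * (2 * lam * r₀) ^ 2 := by
    nlinarith [h2, hpos]
  have hD : c ^ 2 ≤ M ^ 2 - Q ^ 2 := by
    rw [hc, div_pow, div_le_iff₀ (by positivity)]
    linarith [key]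
  have hDnn : 0 ≤ M ^ 2 - Q ^ 2 := le_trans (sq_nonneg c) hD
  have hs : Real.sqrt (M ^ 2 - Q ^ 2) ^ 2 = M ^ 2 - Q ^ 2 := Real.sq_sqrt hDnn
  have hsc : c ≤ Real.sqrt (M ^ 2 - Q ^ 2) := by
    have h3 : Real.sqrt (c ^ 2) ≤ Real.sqrt (M ^ 2 - Q ^ 2) := Real.sqrt_le_sqrt hD
    rw [Real.sqrt_sq_eq_abs] at h3
    exact le_trans (le_abs_self c) h3
  have hMc : M + c = r₀ / lam := by
    rw [hM, hc]; field_simp; ring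
  refine ⟨M + Real.sqrt (M ^ 2 - Q ^ 2), ?_, ?_⟩
  · have : r₀ < r₀ / lam := by
      rw [lt_div_iff₀ h0]; nlinarith
    calc r₀ < r₀ / lam := this
      _ = M + c := hMc.symm
      _ ≤ M + Real.sqrt (M ^ 2 - Q ^ 2) := by linarith
  · simp only [P]; linear_combination (-1 : ℝ) * hs
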